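/- arXiv:2401.13371 — 5 statements merged into one kernel-verified Lean document; each statement's English description precedes it below -/
import Mathlib

section
/- Let the CII estimate be Î_K = Σ_{ℓ=0}^{n−k} C(n−k,ℓ)·λ_{k,ℓ}·Σ_{W⊆K} (−1)^{k−|W|}·Î_{K,ℓ}^W, where for every W ⊆ K and ℓ ∈ L^{|W|} the stratum estimate Î_{K,ℓ}^W is given by the stratum sampling model, and Î_{K,ℓ}^W = I_{K,ℓ}^W for ℓ ∉ L^{|W|}. Then Î_K is an unbiased estimator of the cardinal interaction index: E[Î_K] = I_K. -/
open MeasureTheory ProbabilityTheory Finset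
open scoped ENNReal

/-- Finsets carry the discrete σ-algebra. -/
instance finsetMeasurableSpace (n : ℕ) : MeasurableSpace (Finset (Fin n)) := ⊤

/-- The stratum `{S ⊆ N∖K : |S| = ℓ}`. -/
def strata (n : ℕ) (K : Finset (Fin n)) (ℓ : ℕ) : Finset (Finset (Fin n)) :=
  Kᶜ.powerset.filter (fun S => S.card = ℓ)

/-- The stratum value `I_{K,ℓ}^W = (1/C(n−k,ℓ))·Σ_{S ⊆ N∖K, |S|=ℓ} ν(S ∪ W)`. -/
noncomputable def stratVal (n : ℕ) (ν : Finset (Fin n) → ℝ)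
    (K W : Finset (Fin n)) (ℓ : ℕ) : ℝ :=
  (((n - K.card).choose ℓ : ℝ))⁻¹ * ∑ S ∈ strata n K ℓ, ν (S ∪ W)

/-- The cardinal interaction index `I_K = Σ_{S ⊆ N∖K} λ_{k,|S|}·Δ_K(S)` with
discrete derivative `Δ_K(S) = Σ_{W ⊆ K} (−1)^{k−|W|}·ν(S ∪ W)`. -/
noncomputable def CII (n : ℕ) (ν : Finset (Fin n) → ℝ) (lam : ℕ → ℝ)
    (K : Finset (Fin n)) : ℝ :=
  ∑ S ∈ Kᶜ.powerset, lam S.card *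
    ∑ W ∈ K.powerset, (-1 : ℝ) ^ (K.card - W.card) * ν (S ∪ W)

/-- The stratum estimate: the sample mean `(1/M_{W,ℓ})·Σ_{m=1}^{M_{W,ℓ}} ν(S_m ∪ W)` for
estimated strata (`ℓ ∈ L^{|W|}`), and the exact stratum value otherwise. -/
noncomputable def IhatStrat {Ω : Type*} (n : ℕ) (ν : Finset (Fin n) → ℝ)
    (K : Finset (Fin n)) (L : ℕ → Finset ℕ)
    (S : Finset (Fin n) → ℕ → ℕ → Ω → Finset (Fin n))
    (M : Finset (Fin n) → ℕ → Ω → ℕ) (W : Finset (Fin n)) (ℓ : ℕ) (ω : Ω) : ℝ :=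
  if ℓ ∈ L W.card then
    ((M W ℓ ω : ℝ))⁻¹ * ∑ m ∈ Finset.range (M W ℓ ω), ν (S W ℓ m ω ∪ W)
  else stratVal n ν K W ℓ

/-- The CII estimate
`Î_K = Σ_{ℓ=0}^{n−k} C(n−k,ℓ)·λ_{k,ℓ}·Σ_{W⊆K} (−1)^{k−|W|}·Î_{K,ℓ}^W`. -/
noncomputable def IhatCII {Ω : Type*} (n : ℕ) (ν : Finset (Fin n) → ℝ)
    (K : Finset (Fin n)) (lam : ℕ → ℝ) (L : ℕ → Finset ℕ)
    (S : Finset (Fin n) → ℕ → ℕ → Ω → Finset (Fin n))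
    (M : Finset (Fin n) → ℕ → Ω → ℕ) (ω : Ω) : ℝ :=
  ∑ ℓ ∈ Finset.range (n - K.card + 1), ((n - K.card).choose ℓ : ℝ) * lam ℓ *
    ∑ W ∈ K.powerset, (-1 : ℝ) ^ (K.card - W.card) * IhatStrat n ν K L S M W ℓ ω

/-!
By linearity it suffices that every stratum estimate is unbiased, `E[Î_{K,ℓ}^W] = I_{K,ℓ}^W`.
For an estimated stratum, independence of the count `M` from the sample sequence makes their
joint law a product measure, so by Fubini the expectation is an average over `j ~ M` of the
expectations of sample means of fixed size `j ≥ 1`; each of these equals `I_{K,ℓ}^W` because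
every sample is uniform on the stratum. Finally, grouping the sets `S ⊆ N ∖ K` in `I_K` by their
size `ℓ` gives `I_K = Σ_ℓ C(n−k,ℓ)·λ_{k,ℓ}·Σ_{W⊆K} (−1)^{k−|W|}·I_{K,ℓ}^W`.
-/

noncomputable def sampleMean {α : Type*} (f : α → ℝ) (s : ℕ → α) (j : ℕ) : ℝ :=
  (j : ℝ)⁻¹ * ∑ m ∈ range j, f (s m)

section SampleMean

variable {α Ω : Type*} {f : α → ℝ}

lemma abs_sampleMean_le {C : ℝ} (hC : 0 ≤ C) (hfC : ∀ a, |f a| ≤ C) (s : ℕ → α) (j : ℕ) :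
    |sampleMean f s j| ≤ C := by
  rcases Nat.eq_zero_or_pos j with rfl | hj
  · simpa [sampleMean] using hC
  rw [sampleMean, abs_mul, abs_inv, Nat.abs_cast, inv_mul_le_iff₀ (by positivity)]
  calc |∑ m ∈ range j, f (s m)| ≤ ∑ m ∈ range j, |f (s m)| := abs_sum_le_sum_abs _ _
    _ ≤ ∑ _m ∈ range j, C := sum_le_sum fun m _ => hfC _
    _ = j * C := by simp

variable [MeasurableSpace Ω] {μ : Measure Ω}

lemma integral_sampleMean_of_ne_zero {Y : Ω → ℕ → α} {c : ℝ}
    (hint : ∀ m, Integrable (fun ω => f (Y ω m)) μ) (hmean : ∀ m, ∫ ω, f (Y ω m) ∂μ = c)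
    {j : ℕ} (hj : j ≠ 0) : ∫ ω, sampleMean f (Y ω) j ∂μ = c := by
  simp only [sampleMean]
  rw [integral_const_mul, integral_finsetSum _ fun m _ => hint m]
  simp [hmean, hj]

variable [MeasurableSpace α]

lemma measurable_sampleMean_uncurry (hf : Measurable f) :
    Measurable fun p : ℕ × (ℕ → α) => sampleMean f p.2 p.1 :=
  measurable_from_prod_countable_right fun _ => by
    simp only [sampleMean]
    exact (Finset.measurable_sum _ fun m _ => hf.comp (measurable_pi_apply m)).const_mul _

lemma integrable_sampleMean [IsFiniteMeasure μ] (hf : Measurable f)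
    (hfb : ∃ C, ∀ a, |f a| ≤ C) {Y : Ω → ℕ → α} {M : Ω → ℕ} (hY : Measurable Y)
    (hM : Measurable M) : Integrable (fun ω => sampleMean f (Y ω) (M ω)) μ := by
  obtain ⟨C, hfC⟩ := hfb
  refine .of_bound ((measurable_sampleMean_uncurry hf).comp (hM.prodMk hY)).aestronglyMeasurable
    (max C 0) (.of_forall fun ω => ?_)
  exact abs_sampleMean_le (le_max_right C 0) (fun a => (hfC a).trans (le_max_left C 0)) _ _

theorem integral_sampleMean [IsProbabilityMeasure μ] (hf : Measurable f)
    (hfb : ∃ C, ∀ a, |f a| ≤ C) {Y : Ω → ℕ → α} {M : Ω → ℕ} (hY : Measurable Y)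
    (hM : Measurable M) {c : ℝ} (hmean : ∀ m, ∫ ω, f (Y ω m) ∂μ = c)
    (hMpos : ∀ᵐ ω ∂μ, 1 ≤ M ω) (hind : IndepFun M Y μ) :
    ∫ ω, sampleMean f (Y ω) (M ω) ∂μ = c := by
  obtain ⟨C, hfC⟩ := hfb
  set g : ℕ × (ℕ → α) → ℝ := fun p => sampleMean f p.2 p.1
  have hg : Measurable g := measurable_sampleMean_uncurry hf
  have hgint : Integrable g ((μ.map M).prod (μ.map Y)) := by
    rw [← hind.map_prod_eq_prod_map_map hM.aemeasurable hY.aemeasurable,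
      integrable_map_measure hg.aestronglyMeasurable (hM.prodMk hY).aemeasurable]
    exact integrable_sampleMean hf ⟨C, hfC⟩ hY hM
  have hint : ∀ m, Integrable (fun ω => f (Y ω m)) μ := fun m =>
    .of_bound (hf.comp ((measurable_pi_apply m).comp hY)).aestronglyMeasurable C
      (.of_forall fun ω => hfC _)
  have hMpos' : ∀ᵐ j ∂μ.map M, 1 ≤ j :=
    (ae_map_iff hM.aemeasurable (measurableSet_le measurable_const measurable_id)).2 hMpos
  have := Measure.isProbabilityMeasure_map (μ := μ) hM.aemeasurable
  calc ∫ ω, g (M ω, Y ω) ∂μ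
      = ∫ p, g p ∂μ.map fun ω => (M ω, Y ω) :=
        (integral_map (hM.prodMk hY).aemeasurable hg.aestronglyMeasurable).symm
    _ = ∫ j, ∫ s, g (j, s) ∂μ.map Y ∂μ.map M := by
        rw [hind.map_prod_eq_prod_map_map hM.aemeasurable hY.aemeasurable, integral_prod g hgint]
    _ = ∫ _j, c ∂μ.map M := by
        refine integral_congr_ae (hMpos'.mono fun j hj => ?_)
        change ∫ s, g (j, s) ∂μ.map Y = c
        rw [integral_map (f := fun s => g (j, s)) hY.aemeasurable
          (hg.comp measurable_prodMk_left).aestronglyMeasurable]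
        exact integral_sampleMean_of_ne_zero hint hmean (by omega)
    _ = c := by simp

end SampleMean

section Uniform

variable {α Ω : Type*} [Fintype α] [DecidableEq α] [MeasurableSpace α]
  [MeasurableSingletonClass α] [MeasurableSpace Ω] {μ : Measure Ω} [IsFiniteMeasure μ]

theorem integral_comp_of_uniform {X : Ω → α} (hX : Measurable X) {s : Finset α}
    (hX_unif : ∀ a, μ {ω | X ω = a} = if a ∈ s then (#s : ℝ≥0∞)⁻¹ else 0) (f : α → ℝ) :
    ∫ ω, f (X ω) ∂μ = (#s : ℝ)⁻¹ * ∑ a ∈ s, f a := by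
  rw [← integral_map hX.aemeasurable (Measurable.of_discrete (f := f)).aestronglyMeasurable,
    integral_fintype (.of_finite)]
  simp [map_measureReal_apply hX (measurableSet_singleton _), measureReal_def, Set.preimage,
    hX_unif, apply_ite ENNReal.toReal, ite_mul, Finset.mul_sum]

end Uniform

section Strata

variable {n : ℕ} {K : Finset (Fin n)} {ℓ : ℕ}

lemma card_strata : #(strata n K ℓ) = (n - #K).choose ℓ := by
  rw [strata, ← powersetCard_eq_filter, card_powersetCard, card_compl, Fintype.card_fin]

lemma choose_mul_stratVal (ν : Finset (Fin n) → ℝ) (W : Finset (Fin n)) (hℓ : ℓ ≤ n - #K) :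
    ((n - #K).choose ℓ : ℝ) * stratVal n ν K W ℓ = ∑ S ∈ strata n K ℓ, ν (S ∪ W) := by
  rw [stratVal, ← mul_assoc, mul_inv_cancel₀ (by exact_mod_cast (Nat.choose_pos hℓ).ne'), one_mul]

theorem CII_eq_sum_choose_mul_stratVal (ν : Finset (Fin n) → ℝ) (lam : ℕ → ℝ) :
    CII n ν lam K = ∑ ℓ ∈ range (n - #K + 1), ((n - #K).choose ℓ : ℝ) * lam ℓ *
      ∑ W ∈ K.powerset, (-1 : ℝ) ^ (#K - #W) * stratVal n ν K W ℓ := by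
  have hcard : ∀ S ∈ Kᶜ.powerset, #S ∈ range (n - #K + 1) := fun S hS =>
    mem_range.2 (Nat.lt_succ_of_le
      (by simpa [card_compl] using card_le_card (mem_powerset.mp hS)))
  rw [CII, ← sum_fiberwise_of_maps_to hcard]
  refine sum_congr rfl fun ℓ hℓ => ?_
  have hℓ : ℓ ≤ n - #K := Nat.lt_succ_iff.mp (mem_range.mp hℓ)
  calc ∑ S ∈ strata n K ℓ, lam #S * ∑ W ∈ K.powerset, (-1 : ℝ) ^ (#K - #W) * ν (S ∪ W)
      = ∑ S ∈ strata n K ℓ, ∑ W ∈ K.powerset, lam ℓ * ((-1 : ℝ) ^ (#K - #W) * ν (S ∪ W)) :=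
        sum_congr rfl fun S hS => by rw [(mem_filter.mp hS).2, mul_sum]
    _ = _ := by
        rw [sum_comm, mul_sum]
        refine sum_congr rfl fun W _ => ?_
        rw [← mul_sum, ← mul_sum, ← choose_mul_stratVal ν W hℓ]
        ring

end Strata

section Estimator

variable {Ω : Type*} {n : ℕ} {ν : Finset (Fin n) → ℝ}
  {K : Finset (Fin n)} {L : ℕ → Finset ℕ} {S : Finset (Fin n) → ℕ → ℕ → Ω → Finset (Fin n)}
  {M : Finset (Fin n) → ℕ → Ω → ℕ} {W : Finset (Fin n)} {ℓ : ℕ}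

lemma IhatStrat_of_mem (h : ℓ ∈ L #W) :
    IhatStrat n ν K L S M W ℓ =
      fun ω => sampleMean (fun T => ν (T ∪ W)) (fun m => S W ℓ m ω) (M W ℓ ω) :=
  funext fun _ => if_pos h

lemma IhatStrat_of_notMem (h : ℓ ∉ L #W) :
    IhatStrat n ν K L S M W ℓ = fun _ => stratVal n ν K W ℓ :=
  funext fun _ => if_neg h

variable [MeasurableSpace Ω] {μ : Measure Ω}

lemma integrable_IhatStrat [IsFiniteMeasure μ] (hS : ∀ m, Measurable (S W ℓ m))
    (hM : Measurable (M W ℓ)) : Integrable (IhatStrat n ν K L S M W ℓ) μ := by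
  by_cases h : ℓ ∈ L #W
  · rw [IhatStrat_of_mem h]
    exact integrable_sampleMean .of_discrete (Finite.exists_le _) (measurable_pi_lambda _ hS) hM
  · rw [IhatStrat_of_notMem h]
    exact integrable_const _

theorem integral_IhatStrat [IsProbabilityMeasure μ] (hS : ∀ m, Measurable (S W ℓ m))
    (hM : Measurable (M W ℓ))
    (hunif : ℓ ∈ L #W → ∀ m T, μ {ω | S W ℓ m ω = T}
      = if T ∈ strata n K ℓ then (#(strata n K ℓ) : ℝ≥0∞)⁻¹ else 0)
    (hMpos : ℓ ∈ L #W → ∀ᵐ ω ∂μ, 1 ≤ M W ℓ ω)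
    (hindep : ℓ ∈ L #W → IndepFun (M W ℓ) (fun ω m => S W ℓ m ω) μ) :
    ∫ ω, IhatStrat n ν K L S M W ℓ ω ∂μ = stratVal n ν K W ℓ := by
  by_cases h : ℓ ∈ L #W
  · rw [IhatStrat_of_mem h]
    refine integral_sampleMean .of_discrete (Finite.exists_le _) (measurable_pi_lambda _ hS) hM
      (fun m => ?_) (hMpos h) (hindep h)
    rw [integral_comp_of_uniform (hS m) (hunif h m) fun T => ν (T ∪ W), stratVal, card_strata]
  · simp [IhatStrat_of_notMem h]

theorem integral_IhatCII (lam : ℕ → ℝ)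
    (hint : ∀ W ℓ, Integrable (IhatStrat n ν K L S M W ℓ) μ) :
    ∫ ω, IhatCII n ν K lam L S M ω ∂μ
      = ∑ ℓ ∈ range (n - #K + 1), ((n - #K).choose ℓ : ℝ) * lam ℓ *
          ∑ W ∈ K.powerset, (-1 : ℝ) ^ (#K - #W) * ∫ ω, IhatStrat n ν K L S M W ℓ ω ∂μ := by
  have hinner : ∀ ℓ, Integrable (fun ω => ∑ W ∈ K.powerset,
      (-1 : ℝ) ^ (#K - #W) * IhatStrat n ν K L S M W ℓ ω) μ :=
    fun ℓ => integrable_finsetSum _ fun W _ => (hint W ℓ).const_mul _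
  simp only [IhatCII]
  rw [integral_finsetSum _ fun ℓ _ => (hinner ℓ).const_mul _]
  refine sum_congr rfl fun ℓ _ => ?_
  rw [integral_const_mul, integral_finsetSum _ fun W _ => (hint W ℓ).const_mul _]
  simp only [integral_const_mul]

end Estimator

theorem cii_estimate_unbiased_general {Ω : Type*} [MeasureSpace Ω]
    [IsProbabilityMeasure (ℙ : Measure Ω)]
    (n : ℕ) (ν : Finset (Fin n) → ℝ) (K : Finset (Fin n)) (lam : ℕ → ℝ)
    (L : ℕ → Finset ℕ)
    (S : Finset (Fin n) → ℕ → ℕ → Ω → Finset (Fin n))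
    (M : Finset (Fin n) → ℕ → Ω → ℕ)
    (hSmeas : ∀ W ℓ m, Measurable (S W ℓ m)) (hMmeas : ∀ W ℓ, Measurable (M W ℓ))
    (hunif : ∀ W, W ⊆ K → ∀ ℓ ∈ L W.card, ∀ (m : ℕ) (T : Finset (Fin n)),
      ℙ {ω | S W ℓ m ω = T}
        = if T ∈ strata n K ℓ then ((strata n K ℓ).card : ℝ≥0∞)⁻¹ else 0)
    (hMpos : ∀ W, W ⊆ K → ∀ ℓ ∈ L W.card, ∀ᵐ ω ∂ℙ, 1 ≤ M W ℓ ω)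
    (hindep : ∀ W, W ⊆ K → ∀ ℓ ∈ L W.card,
      IndepFun (M W ℓ) (fun ω => fun m => S W ℓ m ω) ℙ) :
    ∫ ω, IhatCII n ν K lam L S M ω ∂ℙ = CII n ν lam K := by
  rw [integral_IhatCII lam fun W ℓ => integrable_IhatStrat (hSmeas W ℓ) (hMmeas W ℓ),
    CII_eq_sum_choose_mul_stratVal]
  refine sum_congr rfl fun ℓ _ => congrArg _ (sum_congr rfl fun W hW => ?_)
  have hWK := mem_powerset.mp hW
  rw [integral_IhatStrat (hSmeas W ℓ) (hMmeas W ℓ) (hunif W hWK ℓ) (hMpos W hWK ℓ)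
    (hindep W hWK ℓ)]

/-- **Unbiasedness of the CII estimate (Theorem 4.1).**  If for every `W ⊆ K` and
`ℓ ∈ L^{|W|}` the stratum estimate follows the stratum sampling model (i.i.d. samples
uniform on the stratum, with an a.s. positive count independent of the sample sequence),
then `E[Î_K] = I_K`. -/
theorem cii_estimate_unbiased {Ω : Type*} [MeasureSpace Ω]
    [IsProbabilityMeasure (ℙ : Measure Ω)]
    (n : ℕ) (ν : Finset (Fin n) → ℝ) (K : Finset (Fin n)) (lam : ℕ → ℝ)
    (L : ℕ → Finset ℕ) (hL : ∀ w, L w ⊆ Finset.range (n - K.card + 1))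
    (S : Finset (Fin n) → ℕ → ℕ → Ω → Finset (Fin n))
    (M : Finset (Fin n) → ℕ → Ω → ℕ)
    (hSmeas : ∀ W ℓ m, Measurable (S W ℓ m)) (hMmeas : ∀ W ℓ, Measurable (M W ℓ))
    (hiid : ∀ W, W ⊆ K → ∀ ℓ ∈ L W.card,
      iIndepFun (m := fun _ => finsetMeasurableSpace n) (S W ℓ) ℙ)
    (hunif : ∀ W, W ⊆ K → ∀ ℓ ∈ L W.card, ∀ (m : ℕ) (T : Finset (Fin n)),
      ℙ {ω | S W ℓ m ω = T}
        = if T ∈ strata n K ℓ then ((strata n K ℓ).card : ℝ≥0∞)⁻¹ else 0)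
    (hMpos : ∀ W, W ⊆ K → ∀ ℓ ∈ L W.card, ∀ᵐ ω ∂ℙ, 1 ≤ M W ℓ ω)
    (hindep : ∀ W, W ⊆ K → ∀ ℓ ∈ L W.card,
      IndepFun (M W ℓ) (fun ω => fun m => S W ℓ m ω) ℙ) :
    ∫ ω, IhatCII n ν K lam L S M ω ∂ℙ = CII n ν lam K :=
  cii_estimate_unbiased_general n ν K lam L S M hSmeas hMmeas hunif hMpos hindep
end

section
/- For every integer n ≥ 4, the weights P_2 form a probability distribution on {2,…,n−2}: Σ_{s=2}^{n−2} P_2(s) = 1. -/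
/-!
On `2 s ≤ n` the weight is `β_n / (s (s - 1))`, and the reflection `s ↦ n - s` carries the
remaining sizes onto `{2, …, ⌊n/2⌋}` with the same weights. Since `1 / (s (s - 1))` telescopes,
the two halves sum to `β_n (1 - 1/⌊(n-1)/2⌋)` and `β_n (1 - 1/⌊n/2⌋)`, and `β_n` is precisely the
reciprocal of `2 - 1/⌊(n-1)/2⌋ - 1/⌊n/2⌋`.
-/

/-- The coefficient `β_n` of the size distribution `P_2`. -/
noncomputable def betaN (n : ℕ) : ℝ :=
  if Even n then ((n : ℝ) ^ 2 - 2 * n) / (2 * ((n : ℝ) ^ 2 - 4 * n + 2))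
  else ((n : ℝ) - 1) / (2 * ((n : ℝ) - 3))

/-- The SVARM-IQ size distribution `P_2` on `{2,…,n−2}`:
`P_2(s) = β_n/(s(s−1))` if `s ≤ (n−1)/2` and `P_2(s) = β_n/((n−s)(n−s−1))` if `s ≥ n/2`. -/
noncomputable def P2 (n s : ℕ) : ℝ :=
  if (s : ℝ) ≤ ((n : ℝ) - 1) / 2 then betaN n / ((s : ℝ) * ((s : ℝ) - 1))
  else betaN n / (((n : ℝ) - s) * ((n : ℝ) - s - 1))

open Finset

theorem sum_Icc_consecutive {M : Type*} [AddCommMonoid M] (f : ℕ → M) {a b c : ℕ}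
    (hab : a ≤ b + 1) (hbc : b ≤ c) :
    ∑ s ∈ Icc a b, f s + ∑ s ∈ Icc (b + 1) c, f s = ∑ s ∈ Icc a c, f s := by
  rw [← Ico_add_one_right_eq_Icc, ← Ico_add_one_right_eq_Icc, ← Ico_add_one_right_eq_Icc,
    sum_Ico_consecutive _ hab (by omega)]

theorem sum_Icc_reflect {M : Type*} [AddCommMonoid M] (f : ℕ → M) {a b n : ℕ} (hab : a ≤ b)
    (hbn : b ≤ n) : ∑ s ∈ Icc a b, f (n - s) = ∑ t ∈ Icc (n - b) (n - a), f t := by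
  refine sum_nbij' (n - ·) (n - ·) ?_ ?_ ?_ ?_ fun _ _ => rfl <;> intro _ <;>
    simp only [mem_Icc] <;> omega

theorem sum_Icc_two_inv_mul_pred {K : Type*} [Field K] [CharZero K] {m : ℕ} (hm : 1 ≤ m) :
    ∑ s ∈ Icc 2 m, ((s : K) * (s - 1))⁻¹ = 1 - (m : K)⁻¹ := by
  induction m, hm using Nat.le_induction with
  | base => simp
  | succ m hm ih =>
    rw [sum_Icc_succ_top (by omega), ih, Nat.cast_succ, add_sub_cancel_right]
    have : (m : K) ≠ 0 := Nat.cast_ne_zero.2 (by omega)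
    have : (m : K) + 1 ≠ 0 := Nat.cast_add_one_ne_zero m
    field_simp
    ring

theorem P2_of_two_mul_le {n s : ℕ} (h : 2 * s ≤ n) : P2 n s = betaN n / (s * (s - 1)) := by
  unfold P2
  split_ifs with hs
  · rfl
  · -- outside the first branch only `n = 2 s` remains, where both formulas agree
    have hns : n = 2 * s := by
      have : n < 2 * s + 1 := by push Not at hs; exact_mod_cast (by linarith : (n : ℝ) < 2 * s + 1)
      omega
    rw [hns]
    push_cast
    ring_nf

theorem P2_of_le_two_mul {n s : ℕ} (h : n ≤ 2 * s) :
    P2 n s = betaN n / ((n - s) * (n - s - 1)) := by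
  have : ¬ (s : ℝ) ≤ ((n : ℝ) - 1) / 2 := by
    have : (n : ℝ) ≤ 2 * s := by exact_mod_cast h
    intro; linarith
  rw [P2, if_neg this]

theorem betaN_mul_two_sub_inv_sub_inv {n : ℕ} (hn : 4 ≤ n) :
    betaN n * ((1 - (((n - 1) / 2 : ℕ) : ℝ)⁻¹) + (1 - ((n / 2 : ℕ) : ℝ)⁻¹)) = 1 := by
  rcases Nat.even_or_odd' n with ⟨k, rfl | rfl⟩
  · have hk : (2 : ℝ) ≤ k := by exact_mod_cast (by omega : 2 ≤ k)
    have hq : 2 * (k : ℝ) ^ 2 - 4 * k + 1 ≠ 0 := by nlinarith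
    have hβ : betaN (2 * k) = k * (k - 1) / (2 * k ^ 2 - 4 * k + 1) := by
      rw [betaN, if_pos (even_two_mul k), div_eq_div_iff _ hq]
      · push_cast
        ring
      · push_cast
        nlinarith
    rw [hβ, show (2 * k - 1) / 2 = k - 1 by omega, show 2 * k / 2 = k by omega,
      Nat.cast_sub (by omega), div_mul_eq_mul_div, div_eq_one_iff_eq hq]
    have : (k : ℝ) - 1 ≠ 0 := by linarith
    have : (k : ℝ) ≠ 0 := by linarith
    push_cast
    field_simp
    ring
  · have hk : (2 : ℝ) ≤ k := by exact_mod_cast (by omega : 2 ≤ k)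
    have hβ : betaN (2 * k + 1) = k / (2 * (k - 1)) := by
      rw [betaN, if_neg (Nat.not_even_iff_odd.2 (odd_two_mul_add_one k)),
        div_eq_div_iff (by push_cast; linarith) (by linarith)]
      push_cast
      ring
    rw [hβ, show (2 * k + 1 - 1) / 2 = k by omega, show (2 * k + 1) / 2 = k by omega]
    have : (k : ℝ) - 1 ≠ 0 := by linarith
    have : (k : ℝ) ≠ 0 := by linarith
    field_simp
    ring

/-- For every `n ≥ 4`, the weights `P_2` form a probability distribution on `{2,…,n−2}`. -/
theorem P2_sum_eq_one (n : ℕ) (hn : 4 ≤ n) :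
    ∑ s ∈ Finset.Icc 2 (n - 2), P2 n s = 1 := by
  set m := (n - 1) / 2
  have hlow : ∑ s ∈ Icc 2 m, P2 n s = betaN n * (1 - (m : ℝ)⁻¹) := by
    rw [← sum_Icc_two_inv_mul_pred (by omega), mul_sum]
    refine sum_congr rfl fun s hs => ?_
    rw [P2_of_two_mul_le (by rw [mem_Icc] at hs; omega), div_eq_mul_inv]
  have hhigh : ∑ s ∈ Icc (m + 1) (n - 2), P2 n s = betaN n * (1 - ((n / 2 : ℕ) : ℝ)⁻¹) := by
    have hreflect := sum_Icc_reflect (fun t => betaN n * ((t : ℝ) * (t - 1))⁻¹)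
      (a := m + 1) (b := n - 2) (n := n) (by omega) (by omega)
    rw [show n - (n - 2) = 2 by omega, show n - (m + 1) = n / 2 by omega] at hreflect
    rw [← sum_Icc_two_inv_mul_pred (by omega), mul_sum, ← hreflect]
    refine sum_congr rfl fun s hs => ?_
    rw [mem_Icc] at hs
    rw [P2_of_le_two_mul (by omega), Nat.cast_sub (by omega), div_eq_mul_inv]
  rw [← sum_Icc_consecutive _ (show 2 ≤ m + 1 by omega) (show m ≤ n - 2 by omega), hlow, hhigh,
    ← mul_add, betaN_mul_two_sub_inv_sub_inv hn]
end

section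
/- For every integer n ≥ 4, every w ∈ {0,1,2}, and every integer ℓ ≥ 0 with 2 ≤ ℓ + w ≤ n − 2 and ℓ ≤ n − 2, it holds that (C(n−2,ℓ)/C(n,ℓ+w))·P_2(ℓ+w) ≥ 1/(2(n−1)²). -/
set_option maxHeartbeats 1000000

lemma choose_mono_of_double_le (m : ℕ) : ∀ b a, a ≤ b → 2 * b ≤ m →
    m.choose a ≤ m.choose b := by
  intro b
  induction b with
  | zero => intro a ha _; rw [Nat.le_zero.mp ha]
  | succ k ih =>
    intro a ha hb
    rcases Nat.eq_or_lt_of_le ha with rfl | h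
    · exact le_refl _
    · have h1 : a ≤ k := by omega
      have h2 : 2 * k ≤ m := by omega
      refine (ih a h1 h2).trans (Nat.choose_le_succ_of_lt_half_left ?_)
      have : 2 * (k + 1) ≤ m := hb
      omega

lemma choose_mono_of_add_le {m a b : ℕ} (hab : a ≤ b) (h : a + b ≤ m) :
    m.choose a ≤ m.choose b := by
  by_cases hb : 2 * b ≤ m
  · exact choose_mono_of_double_le m b a hab hb
  · have hbm : b ≤ m := by omega
    have := choose_mono_of_double_le m (m - b) a (by omega) (by omega)
    rwa [Nat.choose_symm hbm] at this

lemma choose_id1 (n s : ℕ) (h2 : 2 ≤ s) (hs : s ≤ n) :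
    s * (s - 1) * n.choose s = n * (n - 1) * (n - 2).choose (s - 2) := by
  obtain ⟨a, rfl⟩ : ∃ a, s = a + 2 := ⟨s - 2, by omega⟩
  obtain ⟨b, rfl⟩ : ∃ b, n = b + 2 := ⟨n - 2, by omega⟩
  show (a + 2) * (a + 1) * (b + 2).choose (a + 2) = (b + 2) * (b + 1) * b.choose a
  have h1 := Nat.add_one_mul_choose_eq (b + 1) (a + 1)
  have h2 := Nat.add_one_mul_choose_eq b a
  calc (a + 2) * (a + 1) * (b + 2).choose (a + 2)
      = (a + 1) * ((b + 1 + 1) * (b + 1).choose (a + 1)) := by rw [h1]; ring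
    _ = (b + 2) * ((b + 1) * b.choose a) := by rw [h2]; ring
    _ = (b + 2) * (b + 1) * b.choose a := by ring

lemma choose_id2 (n s : ℕ) (hs : s ≤ n - 2) (hn : 2 ≤ n) :
    (n - s) * (n - s - 1) * n.choose s = n * (n - 1) * (n - 2).choose s := by
  have h1 : n.choose s = n.choose (n - s) := (Nat.choose_symm (by omega)).symm
  rw [h1, choose_id1 n (n - s) (by omega) (by omega)]
  congr 1
  have : n - s - 2 = (n - 2) - s := by omega
  rw [this, Nat.choose_symm hs]



lemma betaN_bound (n : ℕ) (hn : 4 ≤ n) : (n : ℝ) ≤ 2 * ((n : ℝ) - 1) * betaN n := by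
  have hn4 : (4 : ℝ) ≤ n := by exact_mod_cast hn
  unfold betaN
  split_ifs with h
  · have hd : (0 : ℝ) < 2 * ((n : ℝ) ^ 2 - 4 * n + 2) := by nlinarith
    rw [mul_div_assoc', le_div_iff₀ hd]
    nlinarith
  · have hd : (0 : ℝ) < 2 * ((n : ℝ) - 3) := by nlinarith
    rw [mul_div_assoc', le_div_iff₀ hd]
    nlinarith

/-- For every `n ≥ 4`, `w ∈ {0,1,2}` and `ℓ ≥ 0` with `2 ≤ ℓ + w ≤ n − 2` and `ℓ ≤ n − 2`,
`(C(n−2,ℓ)/C(n,ℓ+w))·P_2(ℓ+w) ≥ 1/(2(n−1)²)`. -/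
theorem choose_ratio_mul_P2_ge (n w ℓ : ℕ) (hn : 4 ≤ n) (hw : w ≤ 2)
    (h2 : 2 ≤ ℓ + w) (hln : ℓ + w ≤ n - 2) (hl : ℓ ≤ n - 2) :
    1 / (2 * ((n : ℝ) - 1) ^ 2)
      ≤ (((n - 2).choose ℓ : ℝ) / (n.choose (ℓ + w) : ℝ)) * P2 n (ℓ + w) := by
  have hn4 : (4 : ℝ) ≤ n := by exact_mod_cast hn
  set s := ℓ + w with hsdef
  have hβ := betaN_bound n hn
  have hβpos : 0 < betaN n := by nlinarith
  have hBpos : (0 : ℝ) < (n.choose s : ℝ) := by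
    exact_mod_cast Nat.choose_pos (show s ≤ n by omega)
  have hs2' : (2 : ℝ) ≤ (s : ℝ) := by exact_mod_cast h2
  have hsn' : (s : ℝ) + 2 ≤ (n : ℝ) := by exact_mod_cast (show s + 2 ≤ n by omega)
  unfold P2
  split_ifs with hc
  · -- small branch: s ≤ (n-1)/2
    have hcs : 2 * s + 1 ≤ n := by
      have h1 : 2 * (s : ℝ) < (n : ℝ) := by linarith
      have : 2 * s < n := by exact_mod_cast h1
      omega
    have hT : ((n - 2).choose (s - 2) : ℝ) ≤ ((n - 2).choose ℓ : ℝ) := by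
      exact_mod_cast choose_mono_of_add_le (show s - 2 ≤ ℓ by omega) (by omega)
    have hTpos : (0 : ℝ) < ((n - 2).choose (s - 2) : ℝ) := by
      exact_mod_cast Nat.choose_pos (show s - 2 ≤ n - 2 by omega)
    have hid : ((s : ℝ) * ((s : ℝ) - 1)) * (n.choose s : ℝ)
        = (n : ℝ) * ((n : ℝ) - 1) * ((n - 2).choose (s - 2) : ℝ) := by
      have h1 : ((s * (s - 1) * n.choose s : ℕ) : ℝ)
          = ((n * (n - 1) * (n - 2).choose (s - 2) : ℕ) : ℝ) := by
        exact_mod_cast congrArg (Nat.cast (R := ℝ)) (choose_id1 n s h2 (by omega))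
      push_cast [Nat.cast_sub (show 1 ≤ s by omega), Nat.cast_sub (show 1 ≤ n by omega)] at h1
      linarith
    rw [div_mul_div_comm,
      div_le_div_iff₀ (by nlinarith : (0:ℝ) < 2 * ((n:ℝ) - 1) ^ 2)
        (mul_pos hBpos (by nlinarith : (0:ℝ) < (s:ℝ) * ((s:ℝ) - 1)))]
    nlinarith [hid,
      mul_le_mul_of_nonneg_right hβ (mul_nonneg (by linarith : (0:ℝ) ≤ (n:ℝ) - 1) hTpos.le),
      mul_le_mul_of_nonneg_left hT
        (mul_nonneg (mul_nonneg (by norm_num : (0:ℝ) ≤ 2) (sq_nonneg ((n:ℝ) - 1))) hβpos.le)]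
  · -- large branch: s > (n-1)/2
    push_neg at hc
    have hcs : n ≤ 2 * s := by
      have h1 : (n : ℝ) - 1 < 2 * (s : ℝ) := by
        have := (div_lt_iff₀ (by norm_num : (0:ℝ) < 2)).mp hc
        linarith
      have : n < 2 * s + 1 := by exact_mod_cast (by linarith : (n : ℝ) < 2 * s + 1)
      omega
    have hT : ((n - 2).choose s : ℝ) ≤ ((n - 2).choose ℓ : ℝ) := by
      have h1 := choose_mono_of_add_le (m := n - 2) (a := (n - 2) - s) (b := (n - 2) - ℓ)
        (by omega) (by omega)
      rw [Nat.choose_symm (by omega), Nat.choose_symm (by omega)] at h1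
      exact_mod_cast h1
    have hTpos : (0 : ℝ) < ((n - 2).choose s : ℝ) := by
      exact_mod_cast Nat.choose_pos hln
    have hid : (((n : ℝ) - s) * ((n : ℝ) - s - 1)) * (n.choose s : ℝ)
        = (n : ℝ) * ((n : ℝ) - 1) * ((n - 2).choose s : ℝ) := by
      have h1 : (((n - s) * (n - s - 1) * n.choose s : ℕ) : ℝ)
          = ((n * (n - 1) * (n - 2).choose s : ℕ) : ℝ) := by
        exact_mod_cast congrArg (Nat.cast (R := ℝ)) (choose_id2 n s hln (by omega))
      push_cast [Nat.cast_sub (show s ≤ n by omega), Nat.cast_sub (show 1 ≤ n - s by omega),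
        Nat.cast_sub (show 1 ≤ n by omega)] at h1
      linarith
    rw [div_mul_div_comm,
      div_le_div_iff₀ (by nlinarith : (0:ℝ) < 2 * ((n:ℝ) - 1) ^ 2)
        (mul_pos hBpos (by nlinarith : (0:ℝ) < ((n:ℝ) - s) * ((n:ℝ) - s - 1)))]
    nlinarith [hid,
      mul_le_mul_of_nonneg_right hβ (mul_nonneg (by linarith : (0:ℝ) ≤ (n:ℝ) - 1) hTpos.le),
      mul_le_mul_of_nonneg_left hT
        (mul_nonneg (mul_nonneg (by norm_num : (0:ℝ) ≤ 2) (sq_nonneg ((n:ℝ) - 1))) hβpos.le)]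
end

section
/- For all natural numbers n and k with n ≥ k ≥ 1, it holds that n^{k−1}·(n−k+1) ≥ (n−3)·Π_{i=n−k+2}^{n} i, where the product over an empty range equals 1 and n−3 denotes truncated subtraction when n < 3. -/
open Finset

/-!
Write `m = n - k + 1`, so the product runs over `m + 1, …, n`. When `n - 3 ≤ m` it suffices to
bound every factor by `n`. Otherwise `k ≥ 5`; bounding all factors but the two smallest by `n`
reduces the claim to the quadratic inequality `(n - 3)(m + 1)(m + 2) ≤ n² m` for `1 ≤ m ≤ n`,
which holds at both ends `m = 1`, `m = n` and hence, by concavity in `m`, in between.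
-/

lemma prod_Icc_id_le_pow (a n : ℕ) : ∏ i ∈ Icc a n, i ≤ n ^ (n + 1 - a) :=
  (prod_le_pow_card _ _ _ fun _ hi ↦ (mem_Icc.1 hi).2).trans_eq (by rw [Nat.card_Icc])

lemma prod_Icc_eq_mul_prod_Icc_add_one {M : Type*} [CommMonoid M] (f : ℕ → M) {a b : ℕ}
    (hab : a ≤ b) : ∏ i ∈ Icc a b, f i = f a * ∏ i ∈ Icc (a + 1) b, f i := by
  rw [← mul_prod_Ioc_eq_prod_Icc hab, Icc_add_one_left_eq_Ioc]

lemma sub_three_mul_add_one_mul_add_two_le {m n : ℕ} (hm : 1 ≤ m) (hmn : m ≤ n) :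
    (n - 3) * ((m + 1) * (m + 2)) ≤ n ^ 2 * m := by
  rcases Nat.lt_or_ge n 3 with hn | hn
  · simp [Nat.sub_eq_zero_of_le hn.le]
  · obtain ⟨b, rfl⟩ := Nat.exists_eq_add_of_le hn
    rw [Nat.add_sub_cancel_left]
    nlinarith [Nat.mul_le_mul_left (b * m) hmn, Nat.mul_le_mul_left b hm]

theorem pow_mul_ge_sub_three_mul_prod_general (n k : ℕ) (hkn : k ≤ n) :
    (n - 3) * ∏ i ∈ Finset.Icc (n - k + 2) n, i ≤ n ^ (k - 1) * (n - k + 1) := by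
  obtain ⟨m, hm⟩ : ∃ m, n - k + 1 = m := ⟨_, rfl⟩
  rw [show n - k + 2 = m + 1 by omega, hm]
  rcases le_or_gt (n - 3) m with hsmall | hlarge
  · calc (n - 3) * ∏ i ∈ Icc (m + 1) n, i ≤ m * n ^ (n + 1 - (m + 1)) :=
          Nat.mul_le_mul hsmall (prod_Icc_id_le_pow _ _)
      _ = n ^ (k - 1) * m := by rw [mul_comm]; congr 2; omega
  · calc (n - 3) * ∏ i ∈ Icc (m + 1) n, i
        = (n - 3) * ((m + 1) * (m + 2)) * ∏ i ∈ Icc (m + 3) n, i := by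
          rw [prod_Icc_eq_mul_prod_Icc_add_one _ (by omega),
            prod_Icc_eq_mul_prod_Icc_add_one _ (by omega)]
          ring
      _ ≤ n ^ 2 * m * n ^ (n + 1 - (m + 3)) :=
          Nat.mul_le_mul (sub_three_mul_add_one_mul_add_two_le (by omega) (by omega))
            (prod_Icc_id_le_pow _ _)
      _ = n ^ (k - 1) * m := by
          rw [show k - 1 = 2 + (n + 1 - (m + 3)) by omega, pow_add]
          ring

/-- For all natural numbers `n ≥ k ≥ 1`,
`n^{k−1}·(n−k+1) ≥ (n−3)·Π_{i=n−k+2}^{n} i` (natural-number, truncated subtraction). -/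
theorem pow_mul_ge_sub_three_mul_prod (n k : ℕ) (hk : 1 ≤ k) (hkn : k ≤ n) :
    (n - 3) * ∏ i ∈ Finset.Icc (n - k + 2) n, i ≤ n ^ (k - 1) * (n - k + 1) :=
  pow_mul_ge_sub_three_mul_prod_general n k hkn
end

section
/- For all integers n ≥ 4 and k with 3 ≤ k ≤ n, every integer w with 0 ≤ w ≤ k, and every integer ℓ with 0 ≤ ℓ ≤ n − k, it holds that (C(n−k,ℓ)/C(n,ℓ+w))·(1/(n−3)) ≥ 1/(n^{k−1}·(n−k+1)²). -/
open Nat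

/-- Key factorial identity: `C(b+k, ℓ+w) · (ℓ+1)⋯(ℓ+w) · (b-ℓ+1)⋯(b-ℓ+k-w)
  = C(b,ℓ) · (b+1)⋯(b+k)`. -/
lemma key_id (b k ℓ w : ℕ) (hl : ℓ ≤ b) (hw : w ≤ k) :
    (b + k).choose (ℓ + w) * ((ℓ + 1).ascFactorial w * (b - ℓ + 1).ascFactorial (k - w)) =
      b.choose ℓ * (b + 1).ascFactorial k := by
  have h1 := Nat.choose_mul_factorial_mul_factorial hl
  have h2 := Nat.choose_mul_factorial_mul_factorial (show ℓ + w ≤ b + k by omega)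
  have h3 := Nat.factorial_mul_ascFactorial ℓ w
  have h4 := Nat.factorial_mul_ascFactorial (b - ℓ) (k - w)
  have h5 := Nat.factorial_mul_ascFactorial b k
  have h6 : b - ℓ + (k - w) = b + k - (ℓ + w) := by omega
  rw [h6] at h4
  have hF : ((ℓ ! * ((b - ℓ)! * b !) : ℕ) : ℤ) ≠ 0 := by
    exact_mod_cast (by positivity : (0:ℕ) < ℓ ! * ((b - ℓ)! * b !)).ne'
  have hz : (((b + k).choose (ℓ + w) * ((ℓ + 1).ascFactorial w *
        (b - ℓ + 1).ascFactorial (k - w)) : ℕ) : ℤ) * (ℓ ! * ((b - ℓ)! * b !) : ℕ)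
      = ((b.choose ℓ * (b + 1).ascFactorial k : ℕ) : ℤ) * (ℓ ! * ((b - ℓ)! * b !) : ℕ) := by
    have h1' : ((b.choose ℓ : ℕ) : ℤ) * ℓ ! * (b - ℓ)! = (b ! : ℕ) := by exact_mod_cast h1
    have h2' : (((b + k).choose (ℓ + w) : ℕ) : ℤ) * (ℓ + w)! * ((b + k - (ℓ + w))! : ℕ)
        = ((b + k)! : ℕ) := by exact_mod_cast h2
    have h3' : ((ℓ ! : ℕ) : ℤ) * ((ℓ + 1).ascFactorial w : ℕ) = ((ℓ + w)! : ℕ) := by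
      exact_mod_cast h3
    have h4' : (((b - ℓ)! : ℕ) : ℤ) * ((b - ℓ + 1).ascFactorial (k - w) : ℕ)
        = ((b + k - (ℓ + w))! : ℕ) := by exact_mod_cast h4
    have h5' : ((b ! : ℕ) : ℤ) * ((b + 1).ascFactorial k : ℕ) = ((b + k)! : ℕ) := by
      exact_mod_cast h5
    push_cast
    linear_combination (((b + k).choose (ℓ + w) : ℤ) * b ! *
          ((b - ℓ + 1).ascFactorial (k - w)) * (b - ℓ)!) * h3'
      + (((b + k).choose (ℓ + w) : ℤ) * b ! * (ℓ + w)!) * h4'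
      + ((b ! : ℤ)) * h2' - ((b ! : ℤ)) * h5'
      - (((b + 1).ascFactorial k : ℤ) * b !) * h1'
  exact_mod_cast mul_right_cancel₀ hF hz

lemma asc_le (b k : ℕ) (hk : 1 ≤ k) :
    (b + 1).ascFactorial k ≤ (b + 1) * (b + k) ^ (k - 1) := by
  obtain _ | k' := k
  · omega
  have peel : (b + 1).ascFactorial (k' + 1) = (b + 1) * (b + 2).ascFactorial k' := by
    rw [Nat.ascFactorial_succ, ← Nat.succ_ascFactorial]
  rw [peel, Nat.add_sub_cancel]
  have h := Nat.ascFactorial_le_pow_add (b + 1) k'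
  calc (b + 1) * (b + 2).ascFactorial k' ≤ (b + 1) * (b + 1 + k') ^ k' :=
        Nat.mul_le_mul_left _ h
    _ = (b + 1) * (b + (k' + 1)) ^ k' := by ring_nf

lemma asc_ge (a k : ℕ) (hk : 1 ≤ k) : a + k ≤ (a + 1).ascFactorial k := by
  obtain _ | k' := k
  · omega
  rw [Nat.ascFactorial_succ]
  have h := Nat.ascFactorial_pos a k'
  calc a + (k' + 1) = (a + 1 + k') * 1 := by ring
    _ ≤ (a + 1 + k') * (a + 1).ascFactorial k' := Nat.mul_le_mul_left _ h

/-- The denominator product is at least `k - 1`. -/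
lemma D_ge (b k ℓ w : ℕ) (hl : ℓ ≤ b) (hw : w ≤ k) (hk : 1 ≤ k) :
    k - 1 ≤ (ℓ + 1).ascFactorial w * (b - ℓ + 1).ascFactorial (k - w) := by
  rcases Nat.eq_zero_or_pos w with hw0 | hw1
  · subst hw0
    simp only [Nat.ascFactorial_zero, one_mul]
    calc k - 1 ≤ b - ℓ + (k - 0) := by omega
      _ ≤ (b - ℓ + 1).ascFactorial (k - 0) := asc_ge _ _ (by omega)
  rcases Nat.eq_or_lt_of_le hw with hwk | hwk
  · subst hwk
    simp only [Nat.sub_self, Nat.ascFactorial_zero, mul_one]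
    calc w - 1 ≤ ℓ + w := by omega
      _ ≤ (ℓ + 1).ascFactorial w := asc_ge _ _ hw1
  · -- 1 ≤ w < k
    have h1 : ℓ + w ≤ (ℓ + 1).ascFactorial w := asc_ge _ _ hw1
    have h2 : b - ℓ + (k - w) ≤ (b - ℓ + 1).ascFactorial (k - w) := asc_ge _ _ (by omega)
    have h3 : w * (k - w) ≤ (ℓ + 1).ascFactorial w * (b - ℓ + 1).ascFactorial (k - w) :=
      Nat.mul_le_mul (by omega) (by omega)
    refine le_trans ?_ h3
    obtain ⟨w', rfl⟩ : ∃ w', w = w' + 1 := ⟨w - 1, by omega⟩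
    set v := k - (w' + 1) with hv
    have hv1 : 1 ≤ v := by omega
    have hm : w' * 1 ≤ w' * v := Nat.mul_le_mul_left _ hv1
    have hexp : (w' + 1) * v = w' * v + v := by ring
    omega
      
/-- Main inequality over the naturals. -/
lemma main_nat (n k w ℓ : ℕ) (hn : 4 ≤ n) (hk3 : 3 ≤ k) (hkn : k ≤ n)
    (hw : w ≤ k) (hl : ℓ ≤ n - k) :
    (n - 3) * n.choose (ℓ + w) ≤ (n - k).choose ℓ * (n ^ (k - 1) * (n - k + 1) ^ 2) := by
  set b := n - k with hb
  have hbk : n = b + k := by omega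
  have hid := key_id b k ℓ w hl hw
  set D := (ℓ + 1).ascFactorial w * (b - ℓ + 1).ascFactorial (k - w) with hD
  have hDpos : 0 < D := Nat.mul_pos (Nat.ascFactorial_pos _ _) (Nat.ascFactorial_pos _ _)
  have hDge : k - 1 ≤ D := D_ge b k ℓ w hl hw (by omega)
  have hN : (b + 1).ascFactorial k ≤ (b + 1) * (b + k) ^ (k - 1) := asc_le b k (by omega)
  -- (n - 3) ≤ (k - 1) * (b + 1)
  have h7 : n - 3 ≤ (k - 1) * (b + 1) := by
    have : b ≤ (k - 1) * b := Nat.le_mul_of_pos_left b (by omega)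
    calc n - 3 = b + k - 3 := by omega
      _ ≤ b + (k - 1) := by omega
      _ ≤ (k - 1) * b + (k - 1) := by omega
      _ = (k - 1) * (b + 1) := by ring
  rw [hbk]
  apply Nat.le_of_mul_le_mul_right _ hDpos
  calc (b + k - 3) * (b + k).choose (ℓ + w) * D
      = (b + k - 3) * ((b + k).choose (ℓ + w) * D) := by ring
    _ = (b + k - 3) * (b.choose ℓ * (b + 1).ascFactorial k) := by rw [hid]
    _ ≤ ((k - 1) * (b + 1)) * (b.choose ℓ * ((b + 1) * (b + k) ^ (k - 1))) := by
        apply Nat.mul_le_mul (by omega) (Nat.mul_le_mul_left _ hN)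
    _ = b.choose ℓ * ((b + k) ^ (k - 1) * (b + 1) ^ 2) * (k - 1) := by ring
    _ ≤ b.choose ℓ * ((b + k) ^ (k - 1) * (b + 1) ^ 2) * D := Nat.mul_le_mul_left _ hDge

/-- For integers `n ≥ 4`, `3 ≤ k ≤ n`, `0 ≤ w ≤ k` and `0 ≤ ℓ ≤ n − k`,
`(C(n−k,ℓ)/C(n,ℓ+w))·(1/(n−3)) ≥ 1/(n^{k−1}·(n−k+1)²)`. -/
theorem choose_ratio_ge_uniform (n k w ℓ : ℕ) (hn : 4 ≤ n) (hk3 : 3 ≤ k) (hkn : k ≤ n)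
    (hw : w ≤ k) (hl : ℓ ≤ n - k) :
    1 / ((n : ℝ) ^ (k - 1) * ((n : ℝ) - k + 1) ^ 2)
      ≤ (((n - k).choose ℓ : ℝ) / (n.choose (ℓ + w) : ℝ)) * (1 / ((n : ℝ) - 3)) := by
  have hmain := main_nat n k w ℓ hn hk3 hkn hw hl
  have hmn : ℓ + w ≤ n := by omega
  have ha : (0:ℝ) < (n.choose (ℓ + w) : ℝ) := by exact_mod_cast Nat.choose_pos hmn
  have hb : (0:ℝ) < ((n - k).choose ℓ : ℝ) := by exact_mod_cast Nat.choose_pos hl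
  have hc : ((n:ℝ) - 3) = ((n - 3 : ℕ) : ℝ) := by
    have : (3:ℕ) ≤ n := by omega
    push_cast [Nat.cast_sub this]; ring
  have hd : ((n:ℝ) - k + 1) = ((n - k + 1 : ℕ) : ℝ) := by
    push_cast [Nat.cast_sub hkn]; ring
  have hcpos : (0:ℝ) < (n:ℝ) - 3 := by
    rw [hc]; exact_mod_cast (by omega : 0 < n - 3)
  have hA : (0:ℝ) < (n : ℝ) ^ (k - 1) * ((n : ℝ) - k + 1) ^ 2 := by
    apply mul_pos
    · positivity
    · rw [hd]; positivity
  have hR : (((n - k).choose ℓ : ℝ) / (n.choose (ℓ + w) : ℝ)) * (1 / ((n : ℝ) - 3))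
      = ((n - k).choose ℓ : ℝ) / ((n.choose (ℓ + w) : ℝ) * ((n:ℝ) - 3)) := by
    field_simp
  rw [hR, div_le_div_iff₀ hA (by positivity), one_mul, hc, hd]
  calc ((n.choose (ℓ + w) : ℝ)) * ((n - 3 : ℕ) : ℝ)
      = (((n - 3) * n.choose (ℓ + w) : ℕ) : ℝ) := by push_cast; ring
    _ ≤ ((((n - k).choose ℓ) * (n ^ (k - 1) * (n - k + 1) ^ 2) : ℕ) : ℝ) := by
        exact_mod_cast hmain
    _ = ((n - k).choose ℓ : ℝ) * ((n:ℝ) ^ (k - 1) * (((n - k + 1 : ℕ)) : ℝ) ^ 2) := by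
        push_cast; ring
end
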